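/- Let α be a composition of n and β a composition of m with β ⊆ α, let ℓ = ℓ(β), and fix U ∈ SIT(β). Define φ_U : SIT(α/β) → SIT(α) by: φ_U(T) is the filling of the diagram of α whose restriction to the cells of β is U and whose restriction to the cells of α/β is obtained from T by adding m to every entry. Then φ_U(T) ∈ SIT(α), and for every T ∈ SIT(α/β): inv(φ_U(T)) = inv(T) + inv(U) + inv(α,β), where inv(α,β) = Σ_{i=1}^{ℓ} (α_i − β_i)(β_1 + ⋯ + β_i) + (α_{ℓ+1} + ⋯ + α_{ℓ(α)})(β_1 + ⋯ + β_ℓ). -/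

import Mathlib

open scoped Classical

namespace ImmaculateSkew

/-- `part α i` is the `i`-th part (0-indexed) of the composition `α`, or `0` if out of range. -/
def part (α : List ℕ) (i : ℕ) : ℕ := α.getD i 0

/-- a composition: a list of positive integers -/
def IsComposition (α : List ℕ) : Prop := ∀ x ∈ α, 0 < x

/-- `β ⊆ α` for compositions -/
def SubComp (β α : List ℕ) : Prop :=
  β.length ≤ α.length ∧ ∀ j < β.length, part β j ≤ part α j

/-- cell `(i, j)` (row `i` from the bottom, column `j`, both 0-indexed) lies in the diagram of `α` -/
def InDiagram (α : List ℕ) (c : ℕ × ℕ) : Prop :=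
  c.1 < α.length ∧ c.2 < part α c.1

/-- cell lies in the skew diagram `α/β` -/
def InSkew (α β : List ℕ) (c : ℕ × ℕ) : Prop :=
  InDiagram α c ∧ ¬ InDiagram β c

/-- the finite set of cells of the skew diagram `α/β` -/
noncomputable def skewCells (α β : List ℕ) : Finset (ℕ × ℕ) :=
  (Finset.range α.length ×ˢ Finset.range (α.sum + 1)).filter (InSkew α β)

/-- `N = |α| - |β|` -/
def skewSize (α β : List ℕ) : ℕ := α.sum - β.sum

/-- a filling of the cells of `α/β` using each entry of `E` exactly once, zero off the diagram -/
structure IsStdOn (α β : List ℕ) (E : Finset ℕ) (T : ℕ × ℕ → ℕ) : Prop where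
  zero_off : ∀ c, ¬ InSkew α β c → T c = 0
  mem : ∀ c, InSkew α β c → T c ∈ E
  inj : ∀ c c', InSkew α β c → InSkew α β c' → T c = T c' → c = c'
  surj : ∀ v ∈ E, ∃ c, InSkew α β c ∧ T c = v

/-- row entries strictly increase left to right -/
def RowsStrict (α β : List ℕ) (T : ℕ × ℕ → ℕ) : Prop :=
  ∀ i j j', j < j' → InSkew α β (i, j) → InSkew α β (i, j') → T (i, j) < T (i, j')

/-- row entries weakly increase left to right -/
def RowsWeak (α β : List ℕ) (T : ℕ × ℕ → ℕ) : Prop :=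
  ∀ i j j', j < j' → InSkew α β (i, j) → InSkew α β (i, j') → T (i, j) ≤ T (i, j')

/-- all column entries strictly increase bottom to top -/
def ColsStrict (α β : List ℕ) (T : ℕ × ℕ → ℕ) : Prop :=
  ∀ i i' j, i < i' → InSkew α β (i, j) → InSkew α β (i', j) → T (i, j) < T (i', j)

/-- all column entries weakly increase bottom to top -/
def ColsWeak (α β : List ℕ) (T : ℕ × ℕ → ℕ) : Prop :=
  ∀ i i' j, i < i' → InSkew α β (i, j) → InSkew α β (i', j) → T (i, j) ≤ T (i', j)

/-- the column-1 entries (those in `α/β`) strictly increase bottom to top -/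
def FirstColStrict (α β : List ℕ) (T : ℕ × ℕ → ℕ) : Prop :=
  ∀ i i', i < i' → InSkew α β (i, 0) → InSkew α β (i', 0) → T (i, 0) < T (i', 0)

/-- the column-1 entries (those in `α/β`) weakly increase bottom to top -/
def FirstColWeak (α β : List ℕ) (T : ℕ × ℕ → ℕ) : Prop :=
  ∀ i i', i < i' → InSkew α β (i, 0) → InSkew α β (i', 0) → T (i, 0) ≤ T (i', 0)

/-- standard immaculate tableau of shape `α/β` with entry set `E` -/
def IsSITOn (α β : List ℕ) (E : Finset ℕ) (T : ℕ × ℕ → ℕ) : Prop :=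
  IsStdOn α β E T ∧ RowsStrict α β T ∧ FirstColStrict α β T

/-- standard immaculate tableau of shape `α/β` (entries `1, …, N`) -/
def IsSIT (α β : List ℕ) (T : ℕ × ℕ → ℕ) : Prop :=
  IsSITOn α β (Finset.Icc 1 (skewSize α β)) T

/-- standard extended tableau: all columns increase bottom to top -/
def IsSET (α β : List ℕ) (T : ℕ × ℕ → ℕ) : Prop :=
  IsSIT α β T ∧ ColsStrict α β T

/-- the four descent-set variants -/
inductive Variant | dI | rdI | Astar | Abar

/-- `rowRel a r r'`: the relation required between the row `r` containing `i` and the row `r'`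
containing `i+1` for `i` to be an `a`-descent -/
def rowRel : Variant → ℕ → ℕ → Prop
  | .dI    => fun r r' => r < r'
  | .rdI   => fun r r' => r' ≤ r
  | .Astar => fun r r' => r' < r
  | .Abar  => fun r r' => r ≤ r'

/-- the `a`-descent set of a tableau -/
noncomputable def Des (a : Variant) (α β : List ℕ) (T : ℕ × ℕ → ℕ) : Finset ℕ :=
  (Finset.Icc 1 (skewSize α β - 1)).filter fun k =>
    ∃ c c', InSkew α β c ∧ InSkew α β c' ∧ T c = k ∧ T c' = k + 1 ∧ rowRel a c.1 c'.1

/-- interchange the entries `i` and `i+1` -/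
def swapEntries (i : ℕ) (T : ℕ × ℕ → ℕ) : ℕ × ℕ → ℕ :=
  fun c => if T c = i then i + 1 else if T c = i + 1 then i else T c

/-- the 0-Hecke operator `π_i^a` on `SIT(α/β) ∪ {0}` (the zero function plays the role of `0`) -/
noncomputable def piOp (a : Variant) (α β : List ℕ) (i : ℕ) (T : ℕ × ℕ → ℕ) : ℕ × ℕ → ℕ :=
  if i ∈ Des a α β T then
    (if IsSIT α β (swapEntries i T) then swapEntries i T else fun _ => 0)
  else T

/-- the fundamental quasisymmetric function `F_{comp(D)}` for `D ⊆ {1,…,N-1}`, as a power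
series in the variables `x_1, x_2, …` (variable `x_n` is `X n`; `x_0` is unused) -/
noncomputable def Fund (N : ℕ) (D : Finset ℕ) : MvPowerSeries ℕ ℚ :=
  fun d => (Nat.card {f : Fin N → ℕ //
    (∀ j, 1 ≤ f j) ∧
    (∀ j k : Fin N, j ≤ k → f j ≤ f k) ∧
    (∀ (j : ℕ) (_ : 1 ≤ j) (h2 : j < N), j ∈ D → f ⟨j - 1, by omega⟩ < f ⟨j, h2⟩) ∧
    (∑ j, Finsupp.single (f j) 1) = d} : ℚ)

/-- the generating function `Σ_T x^T` over all fillings of the given cells with positive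
integers satisfying the predicate `P` (and equal to `0` off the given cells) -/
noncomputable def genF (cs : Finset (ℕ × ℕ)) (P : (ℕ × ℕ → ℕ) → Prop) :
    MvPowerSeries ℕ ℚ :=
  fun d => (Nat.card {T : ℕ × ℕ → ℕ //
    (∀ c, c ∉ cs → T c = 0) ∧ (∀ c ∈ cs, 1 ≤ T c) ∧ P T ∧
    (∑ c ∈ cs, Finsupp.single (T c) 1) = d} : ℚ)

/-- complete homogeneous symmetric function `h_r` -/
noncomputable def hFun (r : ℕ) : MvPowerSeries ℕ ℚ :=
  fun d => (Nat.card {f : Fin r → ℕ //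
    (∀ j, 1 ≤ f j) ∧ (∀ j k : Fin r, j ≤ k → f j ≤ f k) ∧
    (∑ j, Finsupp.single (f j) 1) = d} : ℚ)

/-- elementary symmetric function `e_r` -/
noncomputable def eFun (r : ℕ) : MvPowerSeries ℕ ℚ :=
  fun d => (Nat.card {f : Fin r → ℕ //
    (∀ j, 1 ≤ f j) ∧ (∀ j k : Fin r, j < k → f j < f k) ∧
    (∑ j, Finsupp.single (f j) 1) = d} : ℚ)

/-- send a filling to the corresponding basis vector of the free `ℚ`-vector space on
`SIT(α/β)`, or to the zero vector if it is not a standard immaculate tableau -/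
noncomputable def toBasis (α β : List ℕ) (U : ℕ × ℕ → ℕ) :
    ({T : ℕ × ℕ → ℕ // IsSIT α β T} →₀ ℚ) :=
  if h : IsSIT α β U then Finsupp.single ⟨U, h⟩ 1 else 0

/-- the linear extension of `π_i^a` to the free `ℚ`-vector space on `SIT(α/β)` -/
noncomputable def piLin (a : Variant) (α β : List ℕ) (i : ℕ) :
    ({T : ℕ × ℕ → ℕ // IsSIT α β T} →₀ ℚ) →ₗ[ℚ]
      ({T : ℕ × ℕ → ℕ // IsSIT α β T} →₀ ℚ) :=
  Finsupp.lift _ ℚ _ (fun T => toBasis α β (piOp a α β i T.1))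

/-- one step: the tableau `T` is obtained from `S` by applying one operator `π_i^a` -/
def stepRel (a : Variant) (α β : List ℕ) (S T : ℕ × ℕ → ℕ) : Prop :=
  IsSIT α β T ∧ ∃ i, 1 ≤ i ∧ i ≤ skewSize α β - 1 ∧ piOp a α β i S = T

/-- `T` is obtained from `S` by applying a (possibly empty) sequence of operators `π_i^a`,
all intermediate results being tableaux -/
def reach (a : Variant) (α β : List ℕ) : (ℕ × ℕ → ℕ) → (ℕ × ℕ → ℕ) → Prop :=
  Relation.ReflTransGen (stepRel a α β)

/-- the number of skew cells of `α/β` strictly above row `i` other than column-1 cells -/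
noncomputable def aboveCount (α β : List ℕ) (i : ℕ) : ℕ :=
  ∑ i' ∈ Finset.Ico (i + 1) α.length,
    (if i' < β.length then part α i' - part β i' else part α i' - 1)

/-- the tableau `S^0_{α/β}`: the column-1 cells of `α/β` are filled with `1, …, ℓ(α)-ℓ(β)`
bottom to top, then the remaining cells are filled row by row, top to bottom, left to right,
with consecutive integers -/
noncomputable def S0 (α β : List ℕ) : ℕ × ℕ → ℕ :=
  fun c =>
    if InSkew α β c then
      if c.2 = 0 ∧ β.length ≤ c.1 then c.1 - β.length + 1
      else (α.length - β.length) + aboveCount α β c.1 +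
        (if c.1 < β.length then c.2 - part β c.1 + 1 else c.2)
    else 0

/-- the row superstandard tableau `S^{row}_{α/β}`: rows filled left to right with `1, 2, …, N`,
bottom row first -/
noncomputable def Srow (α β : List ℕ) : ℕ × ℕ → ℕ :=
  fun c =>
    if InSkew α β c then
      (∑ i' ∈ Finset.range c.1, (part α i' - part β i')) + (c.2 - part β c.1 + 1)
    else 0

/-- `c` is read before `c'` in the reading word (rows top to bottom, right to left in a row) -/
def readBefore (c c' : ℕ × ℕ) : Prop :=
  c'.1 < c.1 ∨ (c.1 = c'.1 ∧ c'.2 < c.2)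

/-- the number of inversions of the reading word of a tableau of shape `α/β` -/
noncomputable def invNum (α β : List ℕ) (T : ℕ × ℕ → ℕ) : ℕ :=
  ((skewCells α β ×ˢ skewCells α β).filter
    (fun p => readBefore p.1 p.2 ∧ T p.2 < T p.1)).card

/-- `φ_U(T)`: fill the cells of `β` by `U` and those of `α/β` by `T` with all entries of `T`
shifted up by `m = |β|` -/
noncomputable def phiU (α β : List ℕ) (U T : ℕ × ℕ → ℕ) : ℕ × ℕ → ℕ :=
  fun c => if InDiagram β c then U c else if InSkew α β c then T c + β.sum else 0

/-- restriction `T_{≤ m}` of `T` to entries `≤ m` -/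
def restrLe (m : ℕ) (T : ℕ × ℕ → ℕ) : ℕ × ℕ → ℕ :=
  fun c => if T c ≤ m then T c else 0

/-- restriction `T_{> m}` of `T` to entries `> m` -/
def restrGt (m : ℕ) (T : ℕ × ℕ → ℕ) : ℕ × ℕ → ℕ :=
  fun c => if m < T c then T c else 0

/-- standardisation `std(T_{>m})`: keep the entries `> m` and subtract `m` from each -/
def stdGt (m : ℕ) (T : ℕ × ℕ → ℕ) : ℕ × ℕ → ℕ :=
  fun c => if m < T c then T c - m else 0

/-- `T ∈ X_{α,β}`: `T ∈ SIT(α)` and the entries `> |β|` of `T` occupy exactly the cells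
of `α/β` -/
def memX (α β : List ℕ) (T : ℕ × ℕ → ℕ) : Prop :=
  IsSIT α [] T ∧ ∀ c, InDiagram α c → (β.sum < T c ↔ ¬ InDiagram β c)

/-!
Every entry of `U` is at most `m` and every entry of `T` is raised above `m`, so `φ_U(T)` is
the ordinal sum of `U` on `β` and `T` on `α/β`; in particular the cells of `β` form a prefix
of every row and of the first column, which is all the tableau conditions need. For the
inversions, a pair of cells inside `β` or inside `α/β` is an inversion of `φ_U(T)` exactly
when it is one of `U` or of `T`; a pair with one cell in each is an inversion exactly when the
cell of `α/β` is read first. A cell of `α/β` in row `i` lies to the right of row `i` of `β`,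
so it is read before the `β_1 + ⋯ + β_{i+1}` cells of `β` in rows `≤ i`, and summing over the
`α_i - β_i` cells of each row gives `inv(α,β)`.
-/

section Parts

lemma part_eq_zero {γ : List ℕ} {i : ℕ} (h : γ.length ≤ i) : part γ i = 0 :=
  List.getD_eq_default _ _ h

lemma part_nil (i : ℕ) : part [] i = 0 := rfl

lemma part_take {γ : List ℕ} {k i : ℕ} (h : i < k) : part (γ.take k) i = part γ i := by
  simp [part, List.getD_eq_getElem?_getD, h]

lemma part_pos {γ : List ℕ} (hγ : IsComposition γ) {i : ℕ} (h : i < γ.length) :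
    0 < part γ i := by
  simpa [part, List.getD_eq_getElem?_getD, List.getElem?_eq_getElem h] using
    hγ _ (List.getElem_mem h)

lemma sum_eq_sum_range_part (γ : List ℕ) :
    γ.sum = ∑ i ∈ Finset.range γ.length, part γ i := by
  induction γ with
  | nil => rfl
  | cons a l ih =>
    rw [List.sum_cons, List.length_cons, Finset.sum_range_succ', ih, add_comm]
    rfl

lemma sum_drop_eq_sum_Ico_part (γ : List ℕ) (k : ℕ) :
    (γ.drop k).sum = ∑ i ∈ Finset.Ico k γ.length, part γ i := by
  rw [sum_eq_sum_range_part, List.length_drop, Finset.sum_Ico_eq_sum_range]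
  refine Finset.sum_congr rfl fun i _ => ?_
  simp [part, List.getD_eq_getElem?_getD, List.getElem?_drop]

lemma part_le_sum (γ : List ℕ) (i : ℕ) : part γ i ≤ γ.sum := by
  rcases lt_or_ge i γ.length with h | h
  · rw [sum_eq_sum_range_part]
    exact Finset.single_le_sum (f := part γ) (fun _ _ => Nat.zero_le _) (Finset.mem_range.2 h)
  · simp [part_eq_zero h]

end Parts

section Cells

lemma inSkew_iff {α β : List ℕ} {i j : ℕ} :
    InSkew α β (i, j) ↔ i < α.length ∧ part β i ≤ j ∧ j < part α i := by
  simp only [InSkew, InDiagram]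
  rcases lt_or_ge i β.length with h | h
  · grind
  · simp [part_eq_zero h, h.not_gt]

lemma not_inDiagram_nil (c : ℕ × ℕ) : ¬ InDiagram [] c := fun h => Nat.not_lt_zero _ h.1

lemma inSkew_nil {α : List ℕ} {c : ℕ × ℕ} : InSkew α [] c ↔ InDiagram α c := by
  simp [InSkew, not_inDiagram_nil]

lemma mem_skewCells {α β : List ℕ} {c : ℕ × ℕ} : c ∈ skewCells α β ↔ InSkew α β c := by
  simp only [skewCells, Finset.mem_filter, Finset.mem_product, Finset.mem_range,
    and_iff_right_iff_imp]
  exact fun h => ⟨h.1.1, h.1.2.trans_le ((part_le_sum α c.1).trans (Nat.le_succ _))⟩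

lemma InDiagram.mono {α β : List ℕ} (hsub : SubComp β α) {c : ℕ × ℕ} (h : InDiagram β c) :
    InDiagram α c :=
  ⟨h.1.trans_le hsub.1, h.2.trans_le (hsub.2 _ h.1)⟩

lemma InDiagram.of_le_col {γ : List ℕ} {i j j' : ℕ} (h : InDiagram γ (i, j')) (hj : j ≤ j') :
    InDiagram γ (i, j) :=
  ⟨h.1, hj.trans_lt h.2⟩

lemma InDiagram.first_col_of_le {γ : List ℕ} (hγ : IsComposition γ) {i i' j : ℕ}
    (h : InDiagram γ (i', j)) (hi : i ≤ i') : InDiagram γ (i, 0) :=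
  have hi' : i < γ.length := hi.trans_lt h.1
  ⟨hi', part_pos hγ hi'⟩

lemma skewCells_nil_eq_union {α β : List ℕ} (hsub : SubComp β α) :
    skewCells α [] = skewCells β [] ∪ skewCells α β := by
  ext c
  simp only [Finset.mem_union, mem_skewCells, inSkew_nil]
  by_cases hc : InDiagram β c
  · simp [hc, hc.mono hsub]
  · simp [hc, InSkew]

lemma disjoint_skewCells {α β : List ℕ} : Disjoint (skewCells β []) (skewCells α β) :=
  Finset.disjoint_left.2 fun _ h h' =>
    (mem_skewCells.1 h').2 (inSkew_nil.1 (mem_skewCells.1 h))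

/-- Row `i` of `α/β` consists of the columns `part β i ≤ j < part α i`. -/
lemma sum_skewCells_fst (α β : List ℕ) (g : ℕ → ℕ) :
    ∑ c ∈ skewCells α β, g c.1 = ∑ i ∈ Finset.range α.length, (part α i - part β i) * g i := by
  rw [skewCells, Finset.sum_filter, Finset.sum_product]
  refine Finset.sum_congr rfl fun i hi => ?_
  have hrow : (Finset.range (α.sum + 1)).filter (fun j => InSkew α β (i, j)) =
      Finset.Ico (part β i) (part α i) := by
    ext j
    have := part_le_sum α i
    simp only [Finset.mem_filter, Finset.mem_range, Finset.mem_Ico, inSkew_iff]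
    simp at hi
    omega
  rw [← Finset.sum_filter, hrow]
  simp

lemma card_skewCells_nil (γ : List ℕ) : (skewCells γ []).card = γ.sum := by
  simpa [part_nil, ← sum_eq_sum_range_part] using sum_skewCells_fst γ [] (fun _ => 1)

/-- As `j ≥ β_i`, the cells of `β` read after `(i, j)` are exactly those in rows `≤ i`. -/
lemma card_filter_readBefore {β : List ℕ} {i j : ℕ} (hj : part β i ≤ j) :
    ((skewCells β []).filter (readBefore (i, j))).card = (β.take (i + 1)).sum := by
  rw [← card_skewCells_nil]
  congr 1
  ext ⟨i', j'⟩
  simp only [Finset.mem_filter, mem_skewCells, inSkew_nil, InDiagram, readBefore,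
    List.length_take]
  constructor
  · rintro ⟨⟨hi', hj'⟩, h | ⟨rfl, h⟩⟩ <;> refine ⟨by omega, ?_⟩ <;> rwa [part_take (by omega)]
  · rintro ⟨hi', hj'⟩
    rw [part_take (by omega)] at hj'
    refine ⟨⟨by omega, hj'⟩, ?_⟩
    rcases (Nat.lt_succ_iff.1 (lt_of_lt_of_le hi' (min_le_left _ _))).lt_or_eq with h | h
    · exact Or.inl h
    · subst h; exact Or.inr ⟨rfl, by omega⟩

lemma card_skewCells_readBefore (α β : List ℕ) :
    ((skewCells α β ×ˢ skewCells β []).filter fun p => readBefore p.1 p.2).card =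
      ∑ i ∈ Finset.range α.length, (part α i - part β i) * (β.take (i + 1)).sum := by
  rw [Finset.card_filter, Finset.sum_product, ← sum_skewCells_fst]
  refine Finset.sum_congr rfl fun ⟨i, j⟩ hc => ?_
  rw [← Finset.card_filter]
  exact card_filter_readBefore (inSkew_iff.1 (mem_skewCells.1 hc)).2.1

lemma sum_range_part_sub_mul_sum_take {α β : List ℕ} (hlen : β.length ≤ α.length) :
    ∑ i ∈ Finset.range α.length, (part α i - part β i) * (β.take (i + 1)).sum =
      (∑ i ∈ Finset.range β.length, (part α i - part β i) * (β.take (i + 1)).sum) +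
        (α.drop β.length).sum * β.sum := by
  rw [← Finset.sum_range_add_sum_Ico _ hlen, sum_drop_eq_sum_Ico_part, Finset.sum_mul]
  congr 1
  refine Finset.sum_congr rfl fun i hi => ?_
  have hi : β.length ≤ i := (Finset.mem_Ico.1 hi).1
  rw [part_eq_zero hi, Nat.sub_zero, List.take_of_length_le (by omega)]

end Cells

section Inversions

noncomputable def invOn (S : Finset (ℕ × ℕ)) (f : ℕ × ℕ → ℕ) : ℕ :=
  ((S ×ˢ S).filter fun p => readBefore p.1 p.2 ∧ f p.2 < f p.1).card

lemma invNum_eq_invOn (α β : List ℕ) (T : ℕ × ℕ → ℕ) :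
    invNum α β T = invOn (skewCells α β) T := rfl

lemma invOn_congr {S : Finset (ℕ × ℕ)} {f g : ℕ × ℕ → ℕ} (h : ∀ c ∈ S, f c = g c) :
    invOn S f = invOn S g := by
  unfold invOn
  congr 1
  refine Finset.filter_congr fun p hp => ?_
  rw [Finset.mem_product] at hp
  rw [h _ hp.1, h _ hp.2]

lemma invOn_add_const (S : Finset (ℕ × ℕ)) (f : ℕ × ℕ → ℕ) (k : ℕ) :
    invOn S (fun c => f c + k) = invOn S f := by
  simp only [invOn, Nat.add_lt_add_iff_right]

lemma invOn_eq_sum (S : Finset (ℕ × ℕ)) (f : ℕ × ℕ → ℕ) :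
    invOn S f = ∑ c ∈ S, ∑ c' ∈ S, if readBefore c c' ∧ f c' < f c then 1 else 0 := by
  rw [invOn, Finset.card_filter, Finset.sum_product]

/-- If every value on `A` is below every value on `B`, then a pair of cells from different
blocks is an inversion exactly when the `B`-cell is read first. -/
lemma invOn_union_of_lt {A B : Finset (ℕ × ℕ)} {f : ℕ × ℕ → ℕ} (hAB : Disjoint A B)
    (hlt : ∀ a ∈ A, ∀ b ∈ B, f a < f b) :
    invOn (A ∪ B) f =
      invOn A f + invOn B f + ((B ×ˢ A).filter fun p => readBefore p.1 p.2).card := by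
  have hAB0 : ∑ a ∈ A, ∑ b ∈ B, (if readBefore a b ∧ f b < f a then 1 else 0) = 0 :=
    Finset.sum_eq_zero fun a ha => Finset.sum_eq_zero fun b hb =>
      if_neg fun h => (hlt a ha b hb).not_gt h.2
  have hBA : ∑ b ∈ B, ∑ a ∈ A, (if readBefore b a ∧ f a < f b then 1 else 0) =
      ((B ×ˢ A).filter fun p => readBefore p.1 p.2).card := by
    rw [Finset.card_filter, Finset.sum_product]
    exact Finset.sum_congr rfl fun b hb => Finset.sum_congr rfl fun a ha => by
      simp [hlt a ha b hb]
  simp only [invOn_eq_sum, Finset.sum_union hAB, Finset.sum_add_distrib, hAB0, hBA]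
  ring

end Inversions

section Phi

variable {α β : List ℕ} {U T : ℕ × ℕ → ℕ}

lemma phiU_of_inDiagram {c : ℕ × ℕ} (h : InDiagram β c) : phiU α β U T c = U c := if_pos h

lemma phiU_of_inSkew {c : ℕ × ℕ} (h : InSkew α β c) : phiU α β U T c = T c + β.sum := by
  simp [phiU, h, h.2]

lemma phiU_of_not_inDiagram (hsub : SubComp β α) {c : ℕ × ℕ} (h : ¬ InDiagram α c) :
    phiU α β U T c = 0 := by
  have hβ : ¬ InDiagram β c := fun h' => h (h'.mono hsub)
  simp [phiU, hβ, InSkew, h]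

lemma IsSIT.mem_Icc {S : ℕ × ℕ → ℕ} (hS : IsSIT α β S) {c : ℕ × ℕ} (hc : InSkew α β c) :
    1 ≤ S c ∧ S c ≤ α.sum - β.sum :=
  Finset.mem_Icc.1 (hS.1.mem c hc)

lemma phiU_lt_of_inDiagram_of_inSkew (hU : IsSIT β [] U) (hT : IsSIT α β T) {c c' : ℕ × ℕ}
    (hc : InDiagram β c) (hc' : InSkew α β c') : phiU α β U T c < phiU α β U T c' := by
  have hUc := hU.mem_Icc (inSkew_nil.2 hc)
  have hTc' := hT.mem_Icc hc'
  rw [phiU_of_inDiagram hc, phiU_of_inSkew hc']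
  simp only [List.sum_nil, Nat.sub_zero] at hUc
  omega

lemma phiU_lt_phiU (hU : IsSIT β [] U) (hT : IsSIT α β T) {c c' : ℕ × ℕ}
    (hc : InDiagram α c) (hc' : InDiagram α c') (hβc : InDiagram β c' → InDiagram β c)
    (hUlt : InSkew β [] c → InSkew β [] c' → U c < U c')
    (hTlt : InSkew α β c → InSkew α β c' → T c < T c') :
    phiU α β U T c < phiU α β U T c' := by
  by_cases hb' : InDiagram β c'
  · have hb := hβc hb'
    rw [phiU_of_inDiagram hb, phiU_of_inDiagram hb']
    exact hUlt (inSkew_nil.2 hb) (inSkew_nil.2 hb')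
  by_cases hb : InDiagram β c
  · exact phiU_lt_of_inDiagram_of_inSkew hU hT hb ⟨hc', hb'⟩
  rw [phiU_of_inSkew ⟨hc, hb⟩, phiU_of_inSkew ⟨hc', hb'⟩]
  exact Nat.add_lt_add_right (hTlt ⟨hc, hb⟩ ⟨hc', hb'⟩) _

lemma isStdOn_phiU (hsub : SubComp β α) (hU : IsSIT β [] U) (hT : IsSIT α β T) :
    IsStdOn α [] (Finset.Icc 1 (skewSize α [])) (phiU α β U T) := by
  have hUmem : ∀ {c}, InDiagram β c → 1 ≤ U c ∧ U c ≤ β.sum := fun hc => by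
    simpa using hU.mem_Icc (inSkew_nil.2 hc)
  have hβα : β.sum ≤ α.sum := by
    have := Finset.card_le_card
      (Finset.subset_union_left (s₁ := skewCells β []) (s₂ := skewCells α β))
    rwa [← skewCells_nil_eq_union hsub, card_skewCells_nil, card_skewCells_nil] at this
  have hsize : skewSize α [] = α.sum := by simp [skewSize]
  refine ⟨fun c hc => phiU_of_not_inDiagram hsub (mt inSkew_nil.2 hc), fun c hc => ?_,
    fun c c' hc hc' heq => ?_, fun v hv => ?_⟩
  · rw [hsize, Finset.mem_Icc]
    by_cases hb : InDiagram β c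
    · rw [phiU_of_inDiagram hb]
      have := hUmem hb
      omega
    · have := hT.mem_Icc ⟨inSkew_nil.1 hc, hb⟩
      rw [phiU_of_inSkew ⟨inSkew_nil.1 hc, hb⟩]
      omega
  · rw [inSkew_nil] at hc hc'
    by_cases hb : InDiagram β c <;> by_cases hb' : InDiagram β c'
    · rw [phiU_of_inDiagram hb, phiU_of_inDiagram hb'] at heq
      exact hU.1.inj c c' (inSkew_nil.2 hb) (inSkew_nil.2 hb') heq
    · exact absurd heq (phiU_lt_of_inDiagram_of_inSkew hU hT hb ⟨hc', hb'⟩).ne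
    · exact absurd heq (phiU_lt_of_inDiagram_of_inSkew hU hT hb' ⟨hc, hb⟩).ne'
    · rw [phiU_of_inSkew ⟨hc, hb⟩, phiU_of_inSkew ⟨hc', hb'⟩] at heq
      exact hT.1.inj c c' ⟨hc, hb⟩ ⟨hc', hb'⟩ (Nat.add_right_cancel heq)
  · rw [hsize, Finset.mem_Icc] at hv
    by_cases hv' : v ≤ β.sum
    · obtain ⟨c, hc, rfl⟩ := hU.1.surj v (by simp [skewSize]; omega)
      have hc := inSkew_nil.1 hc
      exact ⟨c, inSkew_nil.2 (hc.mono hsub), phiU_of_inDiagram hc⟩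
    · obtain ⟨c, hc, hcv⟩ := hT.1.surj (v - β.sum) (by simp [skewSize]; omega)
      exact ⟨c, inSkew_nil.2 hc.1, by rw [phiU_of_inSkew hc, hcv]; omega⟩

theorem isSIT_phiU (hβ : IsComposition β) (hsub : SubComp β α) (hU : IsSIT β [] U)
    (hT : IsSIT α β T) : IsSIT α [] (phiU α β U T) := by
  refine ⟨isStdOn_phiU hsub hU hT, fun i j j' hj hc hc' => ?_, fun i i' hi hc hc' => ?_⟩
  · exact phiU_lt_phiU hU hT (inSkew_nil.1 hc) (inSkew_nil.1 hc')
      (fun h => h.of_le_col hj.le) (hU.2.1 i j j' hj) (hT.2.1 i j j' hj)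
  · exact phiU_lt_phiU hU hT (inSkew_nil.1 hc) (inSkew_nil.1 hc')
      (fun h => h.first_col_of_le hβ hi.le) (hU.2.2 i i' hi) (hT.2.2 i i' hi)

theorem invNum_phiU (hsub : SubComp β α) (hU : IsSIT β [] U) (hT : IsSIT α β T) :
    invNum α [] (phiU α β U T) = invNum α β T + invNum β [] U +
      ∑ i ∈ Finset.range α.length, (part α i - part β i) * (β.take (i + 1)).sum := by
  have hlt : ∀ c ∈ skewCells β [], ∀ c' ∈ skewCells α β,
      phiU α β U T c < phiU α β U T c' := fun c hc c' hc' =>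
    phiU_lt_of_inDiagram_of_inSkew hU hT (inSkew_nil.1 (mem_skewCells.1 hc))
      (mem_skewCells.1 hc')
  rw [invNum_eq_invOn, skewCells_nil_eq_union hsub, invOn_union_of_lt disjoint_skewCells hlt,
    card_skewCells_readBefore, invOn_congr fun c hc => phiU_of_inDiagram
      (inSkew_nil.1 (mem_skewCells.1 hc)),
    invOn_congr fun c hc => phiU_of_inSkew (mem_skewCells.1 hc), invOn_add_const,
    invNum_eq_invOn, invNum_eq_invOn, add_comm (invOn _ T)]

end Phi

theorem skew_inversions_phi_general (α β : List ℕ)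
    (hβ : IsComposition β) (hsub : SubComp β α)
    (U : ℕ × ℕ → ℕ) (hU : IsSIT β [] U) (T : ℕ × ℕ → ℕ) (hT : IsSIT α β T) :
    IsSIT α [] (phiU α β U T) ∧
    invNum α [] (phiU α β U T) =
      invNum α β T + invNum β [] U +
        ((∑ i ∈ Finset.range β.length,
            (part α i - part β i) * (β.take (i + 1)).sum) +
          (α.drop β.length).sum * β.sum) := by
  refine ⟨isSIT_phiU hβ hsub hU hT, ?_⟩
  rw [invNum_phiU hsub hU hT, sum_range_part_sub_mul_sum_take hsub.1]

/-- for a fixed `U ∈ SIT(β)`, the map `φ_U : SIT(α/β) → SIT(α)` is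
well defined and `inv(φ_U(T)) = inv(T) + inv(U) + inv(α,β)`. -/
theorem skew_inversions_phi (α β : List ℕ) (n m : ℕ)
    (hα : IsComposition α) (hβ : IsComposition β)
    (hn : α.sum = n) (hm : β.sum = m) (hsub : SubComp β α)
    (U : ℕ × ℕ → ℕ) (hU : IsSIT β [] U) (T : ℕ × ℕ → ℕ) (hT : IsSIT α β T) :
    IsSIT α [] (phiU α β U T) ∧
    invNum α [] (phiU α β U T) =
      invNum α β T + invNum β [] U +
        ((∑ i ∈ Finset.range β.length,
            (part α i - part β i) * (β.take (i + 1)).sum) +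
          (α.drop β.length).sum * β.sum) :=
  skew_inversions_phi_general α β hβ hsub U hU T hT

end ImmaculateSkew
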